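/- The generating function of the Thue-Morse sequence achieves only an approximation of the zero function of quality exp(−c (log(1−x))²): there exist constants c₁, c₂ > 0 such that for all x sufficiently close to 1 (x ∈ (x₀, 1) for some x₀ < 1), exp(−c₁ (log(1−x))²) ≤ |∑_{n=0}^{∞} t_n xⁿ| ≤ exp(−c₂ (log(1−x))²). -/

import Mathlib

/-!
For the generating function `F`, splitting into even and odd indices gives
`F(x) = (1 - x) F(x²)`, hence `F(x) = ∏_{k<m} (1 - x^(2^k)) · F(x^(2^m))`. Each factor lies
between `1 - x` and `2^k (1 - x)` (Bernoulli), and `|F| ∈ [1/2, 2]` on `[0, 1/3]`. Choosing `m`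
with `2^m (1 - x) ∈ (2, 4]` makes `x^(2^m) ≤ 1/3`, so `|F(x)|` lies between `(1 - x)^m / 2` and
`2 · 2^(m(m-1)/2) (1 - x)^m`; since `m ≈ log₂ (1/(1 - x))`, both are `exp(-Θ(log² (1 - x)))`.
-/

/-- The Thue-Morse sequence on the alphabet `{-1, 1}`:
`t 0 = -1`, `t (2i) = t i`, `t (2i+1) = -t (2i)`. -/
def thueMorse : ℕ → ℤ
  | 0 => -1
  | n + 1 =>
    have : (n + 1) / 2 < n + 1 := Nat.div_lt_self (Nat.succ_pos n) one_lt_two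
    if (n + 1) % 2 = 0 then thueMorse ((n + 1) / 2) else -thueMorse ((n + 1) / 2)

theorem thueMorse_zero : thueMorse 0 = -1 := by
  rw [thueMorse]

theorem thueMorse_two_mul (n : ℕ) : thueMorse (2 * n) = thueMorse n := by
  rcases n with _ | n
  · rfl
  · rw [show 2 * (n + 1) = (2 * n + 1) + 1 by ring, thueMorse]
    simp [show (2 * n + 1 + 1) % 2 = 0 by omega, show (2 * n + 1 + 1) / 2 = n + 1 by omega]

theorem thueMorse_two_mul_add_one (n : ℕ) : thueMorse (2 * n + 1) = -thueMorse n := by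
  rw [thueMorse]
  simp [show (2 * n + 1) / 2 = n by omega]

theorem abs_thueMorse (n : ℕ) : |thueMorse n| = 1 := by
  induction n using Nat.evenOddRec with
  | h0 => simp [thueMorse_zero]
  | h_even n ih => rwa [thueMorse_two_mul]
  | h_odd n ih => rwa [thueMorse_two_mul_add_one, abs_neg]

theorem abs_tsum_mul_pow_le {f : ℕ → ℝ} (hf : ∀ n, |f n| ≤ 1) {x : ℝ} (hx : |x| < 1) :
    |∑' n, f n * x ^ n| ≤ (1 - |x|)⁻¹ :=
  tsum_of_norm_bounded (f := fun n => f n * x ^ n) (hasSum_geometric_of_lt_one (abs_nonneg x) hx)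
    fun n => by
      simpa [abs_mul, abs_pow] using mul_le_mul_of_nonneg_right (hf n) (pow_nonneg (abs_nonneg x) n)

noncomputable def thueMorseGF (x : ℝ) : ℝ := ∑' n, (thueMorse n : ℝ) * x ^ n

theorem abs_thueMorse_cast (n : ℕ) : |(thueMorse n : ℝ)| = 1 := by
  exact_mod_cast abs_thueMorse n

theorem summable_thueMorse_mul_pow {x : ℝ} (hx : |x| < 1) :
    Summable fun n => (thueMorse n : ℝ) * x ^ n :=
  .of_norm_bounded (summable_geometric_of_lt_one (abs_nonneg x) hx) fun n => by
    simp [abs_thueMorse_cast]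

theorem abs_thueMorseGF_add_one_le {x : ℝ} (hx : |x| < 1) :
    |thueMorseGF x + 1| ≤ |x| / (1 - |x|) := by
  have htail : thueMorseGF x + 1 = x * ∑' n, (thueMorse (n + 1) : ℝ) * x ^ n := by
    rw [thueMorseGF, (summable_thueMorse_mul_pow hx).tsum_eq_zero_add, ← tsum_mul_left]
    simp only [thueMorse_zero, pow_succ]
    push_cast
    ring_nf
  rw [htail, abs_mul, div_eq_mul_inv]
  exact mul_le_mul_of_nonneg_left
    (abs_tsum_mul_pow_le (fun n => (abs_thueMorse_cast _).le) hx) (abs_nonneg x)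

theorem thueMorseGF_eq_mul_sq {x : ℝ} (hx : |x| < 1) :
    thueMorseGF x = (1 - x) * thueMorseGF (x ^ 2) := by
  have hx2 : |x ^ 2| < 1 := by rw [abs_pow]; exact pow_lt_one₀ (abs_nonneg x) hx two_ne_zero
  have heven : ∀ k, (thueMorse (2 * k) : ℝ) * x ^ (2 * k) = (thueMorse k : ℝ) * (x ^ 2) ^ k :=
    fun k => by rw [thueMorse_two_mul, pow_mul]
  have hodd : ∀ k, (thueMorse (2 * k + 1) : ℝ) * x ^ (2 * k + 1)
      = -x * ((thueMorse k : ℝ) * (x ^ 2) ^ k) :=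
    fun k => by rw [thueMorse_two_mul_add_one, pow_succ, pow_mul]; push_cast; ring
  have hs := summable_thueMorse_mul_pow hx2
  rw [thueMorseGF, ← tsum_even_add_odd (by simpa only [heven] using hs)
    (by simpa only [hodd] using hs.mul_left (-x))]
  simp only [heven, hodd, tsum_mul_left, thueMorseGF]
  ring

theorem thueMorseGF_eq_prod_mul {x : ℝ} (hx : |x| < 1) (m : ℕ) :
    thueMorseGF x = (∏ k ∈ Finset.range m, (1 - x ^ 2 ^ k)) * thueMorseGF (x ^ 2 ^ m) := by
  induction m with
  | zero => simp
  | succ m ih =>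
    have hxm : |x ^ 2 ^ m| < 1 := by
      rw [abs_pow]; exact pow_lt_one₀ (abs_nonneg x) hx (by positivity)
    rw [ih, thueMorseGF_eq_mul_sq hxm, Finset.prod_range_succ, ← pow_mul, ← pow_succ]
    ring

theorem abs_thueMorseGF_mem_Icc {y : ℝ} (hy : |y| ≤ 1 / 3) :
    1 / 2 ≤ |thueMorseGF y| ∧ |thueMorseGF y| ≤ 2 := by
  have hdist := abs_thueMorseGF_add_one_le (hy.trans_lt (by norm_num))
  have hratio : |y| / (1 - |y|) ≤ 1 / 2 := by
    rw [div_le_iff₀ (by linarith)]; linarith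
  constructor <;> cases abs_le.mp (hdist.trans hratio) <;>
    rw [abs_eq_neg_self.mpr (by linarith)] <;> linarith

theorem pow_le_prod_one_sub_pow_two_pow {x : ℝ} (h0 : 0 ≤ x) (h1 : x ≤ 1) (m : ℕ) :
    (1 - x) ^ m ≤ ∏ k ∈ Finset.range m, (1 - x ^ 2 ^ k) := by
  calc (1 - x) ^ m = ∏ _k ∈ Finset.range m, (1 - x) := by simp
    _ ≤ ∏ k ∈ Finset.range m, (1 - x ^ 2 ^ k) := by
      refine Finset.prod_le_prod (fun _ _ => by linarith) fun k _ => ?_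
      have := pow_le_pow_of_le_one h0 h1 (Nat.one_le_two_pow (n := k))
      rw [pow_one] at this
      linarith

theorem one_sub_pow_le_mul_one_sub {x : ℝ} (h0 : 0 ≤ x) (n : ℕ) : 1 - x ^ n ≤ n * (1 - x) := by
  have := one_add_mul_le_pow (by linarith : (-2 : ℝ) ≤ x - 1) n
  rw [add_sub_cancel] at this
  linarith

theorem prod_one_sub_pow_two_pow_le {x : ℝ} (h0 : 0 ≤ x) (h1 : x ≤ 1) (m : ℕ) :
    ∏ k ∈ Finset.range m, (1 - x ^ 2 ^ k) ≤ 2 ^ m.choose 2 * (1 - x) ^ m := by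
  calc ∏ k ∈ Finset.range m, (1 - x ^ 2 ^ k)
      ≤ ∏ k ∈ Finset.range m, ((2 : ℝ) ^ k * (1 - x)) := by
        refine Finset.prod_le_prod (fun k _ => ?_) fun k _ => ?_
        · linarith [pow_le_one₀ h0 h1 (n := 2 ^ k)]
        · exact_mod_cast one_sub_pow_le_mul_one_sub h0 (2 ^ k)
    _ = 2 ^ m.choose 2 * (1 - x) ^ m := by
        rw [Finset.prod_mul_distrib, Finset.prod_pow_eq_pow_sum, Finset.sum_range_id,
          Finset.prod_const, Finset.card_range, Nat.choose_two_right]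

theorem abs_thueMorseGF_bounds {x : ℝ} (h0 : 0 ≤ x) (h1 : x < 1) {m : ℕ}
    (hm : x ^ 2 ^ m ≤ 1 / 3) :
    (1 - x) ^ m / 2 ≤ |thueMorseGF x| ∧ |thueMorseGF x| ≤ 2 * 2 ^ m.choose 2 * (1 - x) ^ m := by
  have hx : |x| < 1 := by rwa [abs_of_nonneg h0]
  obtain ⟨hlow, hupp⟩ := abs_thueMorseGF_mem_Icc (y := x ^ 2 ^ m) (by
    rwa [abs_of_nonneg (by positivity)])
  have hprod_low := pow_le_prod_one_sub_pow_two_pow h0 h1.le m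
  have hprod_upp := prod_one_sub_pow_two_pow_le h0 h1.le m
  have hpow : 0 ≤ (1 - x) ^ m := pow_nonneg (by linarith) m
  rw [thueMorseGF_eq_prod_mul hx m, abs_mul, abs_of_nonneg (hpow.trans hprod_low)]
  constructor <;> nlinarith [abs_nonneg (thueMorseGF (x ^ 2 ^ m))]

theorem exists_two_lt_two_pow_mul_le_four {δ : ℝ} (hδ : 0 < δ) (hδ2 : δ ≤ 2) :
    ∃ m : ℕ, 2 < 2 ^ m * δ ∧ 2 ^ m * δ ≤ 4 := by
  obtain ⟨n, hn, hn'⟩ := exists_nat_pow_near (x := 2 / δ) (by rwa [le_div_iff₀ hδ, one_mul])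
    one_lt_two
  refine ⟨n + 1, ?_, ?_⟩
  · rwa [div_lt_iff₀ hδ] at hn'
  · rw [le_div_iff₀ hδ] at hn
    rw [pow_succ]; linarith

theorem pow_two_pow_le_one_third {x : ℝ} (h0 : 0 ≤ x) {m : ℕ} (hm : 2 < 2 ^ m * (1 - x)) :
    x ^ 2 ^ m ≤ 1 / 3 := by
  have hexp : x ≤ Real.exp (-(1 - x)) := by linarith [Real.add_one_le_exp (-(1 - x))]
  have hexp2 : 3 ≤ Real.exp 2 := by linarith [Real.add_one_le_exp 2]
  calc x ^ 2 ^ m ≤ Real.exp (-(1 - x)) ^ 2 ^ m := pow_le_pow_left₀ h0 hexp _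
    _ = Real.exp (-(2 ^ m * (1 - x))) := by rw [← Real.exp_nat_mul]; push_cast; ring_nf
    _ ≤ Real.exp (-2) := Real.exp_le_exp.mpr (by linarith)
    _ ≤ 1 / 3 := by
      rw [Real.exp_neg, one_div]
      exact inv_anti₀ (by norm_num) hexp2

theorem log_two_pow_mul {δ : ℝ} (hδ : 0 < δ) (m : ℕ) :
    Real.log (2 ^ m * δ) = m * Real.log 2 + Real.log δ := by
  rw [Real.log_mul (by positivity) hδ.ne', Real.log_pow]

theorem nat_mul_log_two_add_log_le {δ : ℝ} (hδ : 0 < δ) {m : ℕ} (hm : 2 ^ m * δ ≤ 4) :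
    m * Real.log 2 + Real.log δ ≤ 2 * Real.log 2 := by
  have := Real.log_le_log (by positivity) hm
  rwa [log_two_pow_mul hδ, show (4 : ℝ) = 2 ^ 2 by norm_num, Real.log_pow, Nat.cast_ofNat] at this

theorem exp_neg_three_mul_log_sq_le {δ : ℝ} (hδ : 0 < δ) (hδ5 : δ ≤ Real.exp (-5)) {m : ℕ}
    (hm : 2 ^ m * δ ≤ 4) : Real.exp (-3 * Real.log δ ^ 2) ≤ δ ^ m / 2 := by
  have hℓ : Real.log δ ≤ -5 := by simpa using Real.log_le_log hδ hδ5
  have ha := Real.log_two_gt_d9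
  have ha' := Real.log_two_lt_d9
  have hscale := nat_mul_log_two_add_log_le hδ hm
  rw [← Real.le_log_iff_exp_le (by positivity), Real.log_div (by positivity) two_ne_zero,
    Real.log_pow]
  have hM : (0 : ℝ) ≤ m := m.cast_nonneg
  -- `m ≤ 2 m log 2 ≤ 2 (2 log 2 - log δ)` since `log 2 > 1/2`
  nlinarith [mul_nonneg (mul_nonneg hM (by linarith : 0 ≤ -Real.log δ))
    (by linarith : 0 ≤ 2 * Real.log 2 - 1), mul_le_mul_of_nonneg_right hscale
    (by linarith : 0 ≤ -Real.log δ)]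

theorem two_mul_two_pow_choose_two_mul_pow_le {δ : ℝ} (hδ : 0 < δ) (hδ5 : δ ≤ Real.exp (-5))
    {m : ℕ} (hm : 2 < 2 ^ m * δ) (hm' : 2 ^ m * δ ≤ 4) :
    2 * 2 ^ m.choose 2 * δ ^ m ≤ Real.exp (-(1 / 4) * Real.log δ ^ 2) := by
  have hℓ : Real.log δ ≤ -5 := by simpa using Real.log_le_log hδ hδ5
  have ha := Real.log_two_gt_d9
  have ha' := Real.log_two_lt_d9
  have hscale : Real.log 2 < m * Real.log 2 + Real.log δ := by
    have := Real.log_lt_log two_pos hm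
    rwa [log_two_pow_mul hδ] at this
  have hscale' := nat_mul_log_two_add_log_le hδ hm'
  rw [← Real.log_le_iff_le_exp (by positivity), Real.log_mul (by positivity) (by positivity),
    Real.log_mul two_ne_zero (by positivity), Real.log_pow, Real.log_pow, Nat.cast_choose_two]
  set a := Real.log 2
  set ℓ := Real.log δ
  set B := (m : ℝ) * a
  -- `2a` times the goal; on the range `(a - ℓ, 2a - ℓ]` of `B`, `B (B - a + 2ℓ) ≤ a² - ℓ²`
  suffices 2 * a ^ 2 + B * (B - a + 2 * ℓ) ≤ -(a * ℓ ^ 2 / 2) by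
    refine le_of_mul_le_mul_left ?_ (by linarith : 0 < 2 * a)
    linear_combination this
  nlinarith [mul_nonneg (by linarith : 0 ≤ B - (a - ℓ)) (by linarith : 0 ≤ -(B - a + 2 * ℓ)),
    mul_nonneg (by linarith : 0 ≤ a - ℓ) (by linarith : 0 ≤ (a + ℓ) - (B - a + 2 * ℓ))]

/-- the generating function of the Thue-Morse sequence achieves only an
approximation of the zero function of quality `exp(-c (log(1-x))²)`: there exist
`c₁, c₂ > 0` and `x₀ < 1` such that for all `x ∈ (x₀, 1)`,
`exp(-c₁ (log(1-x))²) ≤ |∑ t_n xⁿ| ≤ exp(-c₂ (log(1-x))²)`. -/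
theorem thueMorse_generating_function_approximation_quality :
    ∃ c₁ > (0 : ℝ), ∃ c₂ > (0 : ℝ), ∃ x₀ < (1 : ℝ), ∀ x ∈ Set.Ioo x₀ (1 : ℝ),
      Real.exp (-c₁ * Real.log (1 - x) ^ 2)
          ≤ |∑' n : ℕ, (thueMorse n : ℝ) * x ^ n| ∧
        |∑' n : ℕ, (thueMorse n : ℝ) * x ^ n|
          ≤ Real.exp (-c₂ * Real.log (1 - x) ^ 2) := by
  refine ⟨3, by norm_num, 1 / 4, by norm_num, 1 - Real.exp (-5),
    by linarith [Real.exp_pos (-5)], ?_⟩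
  rintro x ⟨hx₀, hx₁⟩
  have hδ : 0 < 1 - x := by linarith
  have hδ5 : 1 - x ≤ Real.exp (-5) := by linarith
  have h0 : 0 ≤ x := by linarith [Real.exp_le_one_iff.mpr (by norm_num : (-5 : ℝ) ≤ 0)]
  obtain ⟨m, hm, hm'⟩ := exists_two_lt_two_pow_mul_le_four hδ (by linarith)
  obtain ⟨hlow, hupp⟩ := abs_thueMorseGF_bounds h0 hx₁ (pow_two_pow_le_one_third h0 hm)
  exact ⟨(exp_neg_three_mul_log_sq_le hδ hδ5 hm').trans hlow,
    hupp.trans (two_mul_two_pow_choose_two_mul_pow_le hδ hδ5 hm hm')⟩
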